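/- The rule (IR) is sound for LEI-models: for every LEI-model M, if φ → ψ is valid on M (true at all worlds of M), then the formula φ → (Iψ → Iφ) is true at every world of M. -/
import Mathlib


/-- Three truth values of strong Kleene logic: `f` (0), `n` (∅), `t` (1). -/
inductive TV where
  | f : TV
  | n : TV
  | t : TV
deriving DecidableEq

/-- Kleene negation: swaps 1 and 0, fixes ∅. -/
def TV.neg : TV → TV
  | .t => .f
  | .n => .n
  | .f => .t

/-- Kleene conjunction: minimum under 0 < ∅ < 1. -/
def TV.and : TV → TV → TV
  | .t, b => b
  | .n, .t => .n
  | .n, b => b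
  | .f, _ => .f

/-- Kleene disjunction: maximum under 0 < ∅ < 1. -/
def TV.or : TV → TV → TV
  | .f, b => b
  | .n, .f => .n
  | .n, b => b
  | .t, _ => .t

/-- Two-valued implication: value 1 unless the antecedent is 1 and the consequent is not. -/
def TV.imp : TV → TV → TV
  | .t, .t => .t
  | .t, _ => .f
  | _, _ => .t

/-- Modal formulas of LEI: atoms, ¬, ∧, ∨, → and the ignorance operator I. -/
inductive MForm where
  | atom : ℕ → MForm
  | neg : MForm → MForm
  | conj : MForm → MForm → MForm
  | disj : MForm → MForm → MForm
  | impl : MForm → MForm → MForm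
  | ig : MForm → MForm

/-- A LEI-model: a Kripke frame with a three-valued atomic valuation. -/
structure LEIModel (W : Type) where
  R : W → W → Prop
  V : ℕ → W → TV

open Classical in
/-- Three-valued evaluation in a LEI-model: strong Kleene clauses for ¬, ∧, ∨,
two-valued implication, and `I φ` is `t` at `w` iff `φ` is `t` at `w` and `φ` is not `t`
at any accessible world distinct from `w`; otherwise `I φ` is `f`. -/
noncomputable def val {W : Type} (M : LEIModel W) : MForm → W → TV
  | .atom k, w => M.V k w
  | .neg φ, w => (val M φ w).neg
  | .conj φ ψ, w => (val M φ w).and (val M ψ w)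
  | .disj φ ψ, w => (val M φ w).or (val M ψ w)
  | .impl φ ψ, w => (val M φ w).imp (val M ψ w)
  | .ig φ, w =>
      if val M φ w = TV.t ∧ ∀ w', w' ≠ w → M.R w w' → val M φ w' ≠ TV.t then TV.t
      else TV.f

/-- Soundness of the rule (IR): if φ → ψ is valid on a LEI-model M, then the formula
φ → (Iψ → Iφ) is true at every world of M. -/
theorem stmt7 {W : Type} (M : LEIModel W) (φ ψ : MForm)
    (h : ∀ w : W, val M (.impl φ ψ) w = TV.t) :
    ∀ w : W, val M (.impl φ (.impl (.ig ψ) (.ig φ))) w = TV.t := by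
  have himp : ∀ w : W, val M φ w = TV.t → val M ψ w = TV.t := by
    intro w hw
    have h2 := h w
    simp only [val] at h2
    rw [hw] at h2
    revert h2
    cases hv : val M ψ w <;> simp [TV.imp]
  intro w
  simp only [val]
  by_cases hφ : val M φ w = TV.t
  · rw [hφ]
    by_cases hIψ : val M ψ w = TV.t ∧ ∀ w', w' ≠ w → M.R w w' → val M ψ w' ≠ TV.t
    · rw [if_pos hIψ, if_pos ⟨rfl, fun w' hne hR hφ' => hIψ.2 w' hne hR (himp w' hφ')⟩]; rfl
    · rw [if_neg hIψ]
      rfl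
  · cases hv : val M φ w <;> simp_all [TV.imp]
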